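/- arXiv:0709.3401 — 2 statements merged into one kernel-verified Lean document; each statement's English description precedes it below -/
import Mathlib

section
/- For every fixed β > 0 and x ≥ 0, the function α ↦ p₀ᴮ(β,α,x) is convex on the half-line (−∞, 0]. -/
/-!
Write `E_k = √((ε_k - α)(ε_k - α + 2xλ(k)))`, so that `p₀ᴮ` is `αx` plus the integrals of
`-β⁻¹ log (1 - e^{-βE_k})` and `½ (ε_k - α + xλ(k) - E_k)`. As a geometric mean of two
nonnegative affine functions of `α`, `E_k` is concave in `α`; since `e^{-βE_k}` is then convex and
`y ↦ -log (1 - y)` is convex and increasing, both integrands are convex in `α`, and convexity passes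
to the integrals once they converge. The thermal integrand is `O(|k|⁻² e^{-β|k|²/4})`, integrable in
three dimensions; the ground-state integrand is at most `xλ(0)` near `0` and at most `x²λ(k)²` for
`|k| ≥ 1`, which is integrable because `λ ∈ L²`.
-/

open MeasureTheory Real Filter Set

/-- One-particle energy `ε_k = ‖k‖²/2` (units `ħ = m = 1`). -/
noncomputable def eps (k : EuclideanSpace ℝ (Fin 3)) : ℝ := ‖k‖ ^ 2 / 2

/-- Pressure of the Bogoliubov approximation `p₀ᴮ(β,α,x)`. -/
noncomputable def p0B (lam : EuclideanSpace ℝ (Fin 3) → ℝ) (β α x : ℝ) : ℝ :=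
  α * x
    - (β * (2 * π) ^ 3)⁻¹ *
        (∫ k : EuclideanSpace ℝ (Fin 3),
          Real.log (1 - Real.exp (-(β * Real.sqrt ((eps k - α) * (eps k - α + 2 * x * lam k))))))
    + (2 * (2 * π) ^ 3)⁻¹ *
        (∫ k : EuclideanSpace ℝ (Fin 3),
          (eps k - α + x * lam k - Real.sqrt ((eps k - α) * (eps k - α + 2 * x * lam k))))

/-- Legendre–Fenchel transform `f₀ᴮ(β,y,x) = sup_{α ≤ 0} {α(y+x) − p₀ᴮ(β,α,x)}`. -/
noncomputable def f0B (lam : EuclideanSpace ℝ (Fin 3) → ℝ) (β y x : ℝ) : ℝ :=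
  sSup {v : ℝ | ∃ α ≤ (0 : ℝ), v = α * (y + x) - p0B lam β α x}

section Convexity

variable {E : Type*} [AddCommGroup E] [Module ℝ E] {s : Set E} {f g : E → ℝ}

theorem ConvexOn.comp_of_mapsTo {t : Set ℝ} {φ : ℝ → ℝ} (hφ : ConvexOn ℝ t φ)
    (hf : ConvexOn ℝ s f) (hφ_mono : MonotoneOn φ t) (hst : MapsTo f s t) :
    ConvexOn ℝ s (φ ∘ f) :=
  ⟨hf.1, fun _ hx _ hy _ _ ha hb hab =>
    (hφ_mono (hst (hf.1 hx hy ha hb hab)) (hφ.1 (hst hx) (hst hy) ha hb hab)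
      (hf.2 hx hy ha hb hab)).trans (hφ.2 (hst hx) (hst hy) ha hb hab)⟩

/-- Cauchy–Schwarz: the difference of the squares is `ab(√(pw) - √(qr))²`. -/
theorem mul_sqrt_add_mul_sqrt_le {a b p q r w : ℝ} (ha : 0 ≤ a) (hb : 0 ≤ b) (hp : 0 ≤ p)
    (hq : 0 ≤ q) (hr : 0 ≤ r) (hw : 0 ≤ w) :
    a * √(p * r) + b * √(q * w) ≤ √((a * p + b * q) * (a * r + b * w)) := by
  obtain ⟨P, hP, rfl⟩ : ∃ P, 0 ≤ P ∧ p = P ^ 2 := ⟨√p, sqrt_nonneg _, (sq_sqrt hp).symm⟩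
  obtain ⟨Q, hQ, rfl⟩ : ∃ Q, 0 ≤ Q ∧ q = Q ^ 2 := ⟨√q, sqrt_nonneg _, (sq_sqrt hq).symm⟩
  obtain ⟨R, hR, rfl⟩ : ∃ R, 0 ≤ R ∧ r = R ^ 2 := ⟨√r, sqrt_nonneg _, (sq_sqrt hr).symm⟩
  obtain ⟨W, hW, rfl⟩ : ∃ W, 0 ≤ W ∧ w = W ^ 2 := ⟨√w, sqrt_nonneg _, (sq_sqrt hw).symm⟩
  rw [← mul_pow, ← mul_pow, sqrt_sq (by positivity), sqrt_sq (by positivity)]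
  apply Real.le_sqrt_of_sq_le
  nlinarith [mul_nonneg (mul_nonneg ha hb) (sq_nonneg (P * W - Q * R))]

theorem ConcaveOn.sqrt_mul (hf : ConcaveOn ℝ s f) (hg : ConcaveOn ℝ s g)
    (hf₀ : ∀ x ∈ s, 0 ≤ f x) (hg₀ : ∀ x ∈ s, 0 ≤ g x) :
    ConcaveOn ℝ s fun x => √(f x * g x) := by
  refine ⟨hf.1, fun x hx y hy a b ha hb hab => ?_⟩
  calc a • √(f x * g x) + b • √(f y * g y)
      ≤ √((a • f x + b • f y) * (a • g x + b • g y)) :=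
        mul_sqrt_add_mul_sqrt_le ha hb (hf₀ x hx) (hf₀ y hy) (hg₀ x hx) (hg₀ y hy)
    _ ≤ √(f (a • x + b • y) * g (a • x + b • y)) :=
        sqrt_le_sqrt (mul_le_mul (hf.2 hx hy ha hb hab) (hg.2 hx hy ha hb hab)
          (by have := hg₀ x hx; have := hg₀ y hy; positivity) (hf₀ _ (hf.1 hx hy ha hb hab)))

theorem convexOn_neg_log_one_sub : ConvexOn ℝ (Iio 1) fun y => -log (1 - y) := by
  refine ⟨convex_Iio 1, fun y hy z hz a b ha hb hab => ?_⟩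
  have := strictConcaveOn_log_Ioi.concaveOn.2 (mem_Ioi.2 (sub_pos.2 hy)) (mem_Ioi.2 (sub_pos.2 hz))
    ha hb hab
  simp only [smul_eq_mul] at this ⊢
  rw [show 1 - (a * y + b * z) = a * (1 - y) + b * (1 - z) by linear_combination -hab]
  linarith

theorem monotoneOn_neg_log_one_sub : MonotoneOn (fun y => -log (1 - y)) (Iio 1) :=
  fun _ _ _ hz hyz => neg_le_neg (log_le_log (sub_pos.2 hz) (by linarith))

theorem ConcaveOn.convexOn_neg_log_one_sub_exp_neg (hf : ConcaveOn ℝ s f)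
    (hf₀ : ∀ x ∈ s, 0 < f x) : ConvexOn ℝ s fun x => -log (1 - exp (-f x)) := by
  have hexp : ConvexOn ℝ s fun x => exp (-f x) :=
    convexOn_exp.comp_of_mapsTo hf.neg (exp_monotone.monotoneOn _) (mapsTo_univ _ _)
  exact convexOn_neg_log_one_sub.comp_of_mapsTo hexp monotoneOn_neg_log_one_sub
    fun x hx => exp_lt_one_iff.2 (neg_lt_zero.2 (hf₀ x hx))

theorem convexOn_integral {X : Type*} [MeasurableSpace X] {μ : Measure X} {f : E → X → ℝ}
    (hs : Convex ℝ s) (hint : ∀ a ∈ s, Integrable (f a) μ)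
    (hf : ∀ᵐ x ∂μ, ConvexOn ℝ s (f · x)) : ConvexOn ℝ s fun a => ∫ x, f a x ∂μ := by
  refine ⟨hs, fun a ha b hb p q hp hq hpq => ?_⟩
  calc ∫ x, f (p • a + q • b) x ∂μ ≤ ∫ x, p * f a x + q * f b x ∂μ :=
        integral_mono_ae (hint _ (hs ha hb hp hq hpq))
          (((hint a ha).const_mul p).add ((hint b hb).const_mul q))
          (hf.mono fun x hx => hx.2 ha hb hp hq hpq)
    _ = p • ∫ x, f a x ∂μ + q • ∫ x, f b x ∂μ := by
        rw [integral_add ((hint a ha).const_mul p) ((hint b hb).const_mul q),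
          integral_const_mul, integral_const_mul, smul_eq_mul, smul_eq_mul]

end Convexity

theorem le_sqrt_mul_add_two_mul {u m : ℝ} (hu : 0 ≤ u) (hm : 0 ≤ m) : u ≤ √(u * (u + 2 * m)) :=
  Real.le_sqrt_of_sq_le (by nlinarith)

theorem add_sub_sqrt_mul_add_two_mul_nonneg {u m : ℝ} (hu : 0 ≤ u) (hm : 0 ≤ m) :
    0 ≤ u + m - √(u * (u + 2 * m)) := by
  rw [sub_nonneg]
  exact Real.sqrt_le_iff.2 ⟨by linarith, by nlinarith⟩

/-- `u + m - E = m² / (u + m + E)` with `E = √(u(u + 2m)) ≥ u`. -/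
theorem add_sub_sqrt_mul_add_two_mul_mul_le {u m : ℝ} (hu : 0 ≤ u) (hm : 0 ≤ m) :
    (u + m - √(u * (u + 2 * m))) * (2 * u) ≤ m ^ 2 := by
  have hE := le_sqrt_mul_add_two_mul hu hm
  have hE_sq : √(u * (u + 2 * m)) ^ 2 = u * (u + 2 * m) := sq_sqrt (by positivity)
  nlinarith [add_sub_sqrt_mul_add_two_mul_nonneg hu hm]

theorem neg_log_one_sub_exp_neg_nonneg {s : ℝ} (hs : 0 ≤ s) : 0 ≤ -log (1 - exp (-s)) :=
  neg_nonneg.2 (log_nonpos (sub_nonneg.2 (exp_le_one_iff.2 (by linarith)))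
    (by linarith [exp_pos (-s)]))

/-- The Bose factor `-log (1 - e^{-s})` is at most `1 / (e^t - 1)`, and `e^t - 1 ≥ t e^{t/2}`
because `sinh (t/2) ≥ t/2`. -/
theorem neg_log_one_sub_exp_neg_le {s t : ℝ} (ht : 0 < t) (hts : t ≤ s) :
    -log (1 - exp (-s)) ≤ exp (-(t / 2)) / t := by
  set w := exp (-(t / 2))
  have hw : 0 < w := exp_pos _
  have hw_sq : exp (-t) = w ^ 2 := by rw [← exp_nat_mul]; congr 1; ring
  have hw1 : w < 1 := exp_lt_one_iff.2 (by linarith)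
  have hsinh : t ≤ w⁻¹ - w := by
    have := self_le_sinh_iff.2 (by positivity : 0 ≤ t / 2)
    rw [sinh_eq] at this
    have hw_inv : w⁻¹ = exp (t / 2) := by rw [← exp_neg, neg_neg]
    linarith
  calc -log (1 - exp (-s)) ≤ -log (1 - exp (-t)) :=
        neg_le_neg (log_le_log (by rw [hw_sq]; nlinarith)
          (by gcongr))
    _ ≤ (1 - exp (-t))⁻¹ - 1 := by
        linarith [one_sub_inv_le_log_of_pos (show 0 < 1 - exp (-t) by rw [hw_sq]; nlinarith)]
    _ ≤ w / t := by
        have h1w : 0 < 1 - w ^ 2 := by nlinarith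
        rw [hw_sq, le_div_iff₀ ht, show (1 - w ^ 2)⁻¹ - 1 = w ^ 2 / (1 - w ^ 2) by field_simp; ring,
          div_mul_eq_mul_div, div_le_iff₀ h1w]
        nlinarith [mul_le_mul_of_nonneg_left hsinh (sq_nonneg w), mul_inv_cancel₀ hw.ne']

theorem integrable_exp_neg_mul_sq_norm_div_sq_norm {E : Type*} [NormedAddCommGroup E]
    [NormedSpace ℝ E] [FiniteDimensional ℝ E] [MeasurableSpace E] [BorelSpace E]
    (μ : Measure E) [μ.IsAddHaarMeasure] (hE : 3 ≤ Module.finrank ℝ E) {b : ℝ} (hb : 0 < b) :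
    Integrable (fun k => exp (-b * ‖k‖ ^ 2) / ‖k‖ ^ 2) μ := by
  have : Nontrivial E := Module.nontrivial_of_finrank_pos (R := ℝ) (by omega)
  rw [integrable_fun_norm_addHaar μ (f := fun r => exp (-b * r ^ 2) / r ^ 2)]
  refine (integrableOn_rpow_mul_exp_neg_mul_sq hb (s := (Module.finrank ℝ E - 3 : ℕ))
    (by linarith [Nat.cast_nonneg (α := ℝ) (Module.finrank ℝ E - 3)])).congr_fun
    (fun r (hr : 0 < r) => ?_) measurableSet_Ioi
  simp only [rpow_natCast, smul_eq_mul]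
  rw [pow_sub₀ _ hr.ne' hE, pow_sub₀ _ hr.ne' (by omega)]
  field_simp

@[fun_prop]
theorem continuous_eps : Continuous eps := (continuous_norm.pow 2).div_const 2

theorem eps_nonneg (k : EuclideanSpace ℝ (Fin 3)) : 0 ≤ eps k := by unfold eps; positivity

theorem eps_pos {k : EuclideanSpace ℝ (Fin 3)} (hk : k ≠ 0) : 0 < eps k := by
  unfold eps; have := norm_pos_iff.2 hk; positivity

noncomputable def bogoliubovDispersion (lam : EuclideanSpace ℝ (Fin 3) → ℝ) (x α : ℝ)
    (k : EuclideanSpace ℝ (Fin 3)) : ℝ :=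
  √((eps k - α) * (eps k - α + 2 * x * lam k))

noncomputable def thermalIntegrand (lam : EuclideanSpace ℝ (Fin 3) → ℝ) (β x α : ℝ)
    (k : EuclideanSpace ℝ (Fin 3)) : ℝ :=
  -log (1 - exp (-(β * bogoliubovDispersion lam x α k)))

noncomputable def groundStateIntegrand (lam : EuclideanSpace ℝ (Fin 3) → ℝ) (x α : ℝ)
    (k : EuclideanSpace ℝ (Fin 3)) : ℝ :=
  eps k - α + x * lam k - bogoliubovDispersion lam x α k

theorem p0B_eq (lam : EuclideanSpace ℝ (Fin 3) → ℝ) (β α x : ℝ) :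
    p0B lam β α x = x * α + (β * (2 * π) ^ 3)⁻¹ * (∫ k, thermalIntegrand lam β x α k)
      + (2 * (2 * π) ^ 3)⁻¹ * ∫ k, groundStateIntegrand lam x α k := by
  simp only [p0B, thermalIntegrand, groundStateIntegrand, bogoliubovDispersion, integral_neg]
  ring

section Bogoliubov

variable {lam : EuclideanSpace ℝ (Fin 3) → ℝ} {β x α : ℝ}

theorem eps_sub_le_bogoliubovDispersion (hlam : ∀ k, 0 ≤ lam k) (hx : 0 ≤ x) (hα : α ≤ 0)
    (k : EuclideanSpace ℝ (Fin 3)) : eps k - α ≤ bogoliubovDispersion lam x α k := by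
  have := le_sqrt_mul_add_two_mul (u := eps k - α) (by linarith [eps_nonneg k])
    (mul_nonneg hx (hlam k))
  simpa only [bogoliubovDispersion, mul_assoc] using this

theorem concaveOn_bogoliubovDispersion (hlam : ∀ k, 0 ≤ lam k) (hx : 0 ≤ x)
    (k : EuclideanSpace ℝ (Fin 3)) :
    ConcaveOn ℝ (Iic 0) fun α => bogoliubovDispersion lam x α k := by
  have haff : ∀ c, ConcaveOn ℝ (Iic 0) fun α : ℝ => c - α := fun c =>
    (concaveOn_const c (convex_Iic 0)).sub (convexOn_id (convex_Iic 0))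
  have hm : 0 ≤ 2 * x * lam k := by have := hlam k; positivity
  refine ((haff (eps k)).sqrt_mul (haff (eps k + 2 * x * lam k))
    (fun α hα => by linarith [eps_nonneg k, mem_Iic.1 hα])
    (fun α hα => by linarith [eps_nonneg k, mem_Iic.1 hα])).congr fun α _ => ?_
  simp only [bogoliubovDispersion, add_sub_right_comm]

theorem bogoliubovDispersion_pos (hlam : ∀ k, 0 ≤ lam k) (hx : 0 ≤ x) (hα : α ≤ 0)
    {k : EuclideanSpace ℝ (Fin 3)} (hk : k ≠ 0) : 0 < bogoliubovDispersion lam x α k := by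
  linarith [eps_pos hk, eps_sub_le_bogoliubovDispersion hlam hx hα k]

theorem convexOn_thermalIntegrand (hlam : ∀ k, 0 ≤ lam k) (hβ : 0 < β) (hx : 0 ≤ x)
    {k : EuclideanSpace ℝ (Fin 3)} (hk : k ≠ 0) :
    ConvexOn ℝ (Iic 0) fun α => thermalIntegrand lam β x α k :=
  ((concaveOn_bogoliubovDispersion hlam hx k).smul hβ.le).convexOn_neg_log_one_sub_exp_neg
    fun _ hα => mul_pos hβ (bogoliubovDispersion_pos hlam hx hα hk)

theorem convexOn_groundStateIntegrand (hlam : ∀ k, 0 ≤ lam k) (hx : 0 ≤ x)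
    (k : EuclideanSpace ℝ (Fin 3)) :
    ConvexOn ℝ (Iic 0) fun α => groundStateIntegrand lam x α k :=
  (((convexOn_const (eps k + x * lam k) (convex_Iic 0)).sub (concaveOn_id (convex_Iic 0))).sub
    (concaveOn_bogoliubovDispersion hlam hx k)).congr fun α _ => by
      simp only [groundStateIntegrand, Pi.sub_apply, id]; ring

theorem aemeasurable_bogoliubovDispersion (hlam : AEMeasurable lam) :
    AEMeasurable (bogoliubovDispersion lam x α) := by
  unfold bogoliubovDispersion
  fun_prop

theorem integrable_thermalIntegrand (hlam : ∀ k, 0 ≤ lam k) (hlam_meas : AEMeasurable lam)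
    (hβ : 0 < β) (hx : 0 ≤ x) (hα : α ≤ 0) : Integrable (thermalIntegrand lam β x α) := by
  have hdom := (integrable_exp_neg_mul_sq_norm_div_sq_norm volume
    (finrank_euclideanSpace_fin (𝕜 := ℝ) (n := 3)).ge (by positivity : 0 < β / 4)).const_mul (2 / β)
  refine hdom.mono' ?_ ?_
  · unfold thermalIntegrand
    have := aemeasurable_bogoliubovDispersion (x := x) (α := α) hlam_meas
    exact AEMeasurable.aestronglyMeasurable (by fun_prop)
  filter_upwards [volume.ae_ne 0] with k hk
  have hk_norm : 0 < ‖k‖ := norm_pos_iff.2 hk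
  have hts : β * eps k ≤ β * bogoliubovDispersion lam x α k :=
    mul_le_mul_of_nonneg_left (by linarith [eps_sub_le_bogoliubovDispersion hlam hx hα k]) hβ.le
  have ht : 0 < β * eps k := mul_pos hβ (eps_pos hk)
  rw [thermalIntegrand, norm_of_nonneg (neg_log_one_sub_exp_neg_nonneg (ht.le.trans hts))]
  calc -log (1 - exp (-(β * bogoliubovDispersion lam x α k)))
      ≤ exp (-(β * eps k / 2)) / (β * eps k) := neg_log_one_sub_exp_neg_le ht hts
    _ = 2 / β * (exp (-(β / 4) * ‖k‖ ^ 2) / ‖k‖ ^ 2) := by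
        rw [eps, show -(β * (‖k‖ ^ 2 / 2) / 2) = -(β / 4) * ‖k‖ ^ 2 by ring]
        field_simp

theorem integrable_groundStateIntegrand (hlam : ∀ k, 0 ≤ lam k ∧ lam k ≤ lam 0)
    (hlam_meas : AEMeasurable lam) (hlam_sq : Integrable fun k => lam k ^ 2) (hx : 0 ≤ x)
    (hα : α ≤ 0) : Integrable (groundStateIntegrand lam x α) := by
  have hdom : Integrable fun k =>
      (Metric.ball 0 1).indicator (fun _ => x * lam 0) k + x ^ 2 * lam k ^ 2 :=
    ((integrable_indicator_iff measurableSet_ball).2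
      (integrableOn_const measure_ball_lt_top.ne)).add (hlam_sq.const_mul _)
  refine hdom.mono' ?_ (.of_forall fun k => ?_)
  · unfold groundStateIntegrand
    have := aemeasurable_bogoliubovDispersion (x := x) (α := α) hlam_meas
    exact AEMeasurable.aestronglyMeasurable (by fun_prop)
  have hu : 0 ≤ eps k - α := by linarith [eps_nonneg k]
  have hm : 0 ≤ x * lam k := mul_nonneg hx (hlam k).1
  have hM : groundStateIntegrand lam x α k
      = eps k - α + x * lam k - √((eps k - α) * (eps k - α + 2 * (x * lam k))) := by
    rw [groundStateIntegrand, bogoliubovDispersion, mul_assoc 2]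
  have hM₀ := add_sub_sqrt_mul_add_two_mul_nonneg hu hm
  rw [norm_of_nonneg (hM ▸ hM₀), hM]
  by_cases hk : k ∈ Metric.ball 0 1
  · have hMm := le_sqrt_mul_add_two_mul hu hm
    have hm₀ : x * lam k ≤ x * lam 0 := mul_le_mul_of_nonneg_left (hlam k).2 hx
    rw [indicator_of_mem hk]
    nlinarith
  · have hk1 : 1 / 2 ≤ eps k := by
      rw [mem_ball_zero_iff, not_lt] at hk
      unfold eps
      nlinarith
    rw [indicator_of_notMem hk, zero_add, ← mul_pow]
    nlinarith [add_sub_sqrt_mul_add_two_mul_mul_le hu hm]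

end Bogoliubov

theorem stmt_2_general (lam : EuclideanSpace ℝ (Fin 3) → ℝ)
    (hlam_bd : ∀ k, 0 ≤ lam k ∧ lam k ≤ lam 0) (hlamL2 : MemLp lam 2 volume)
    (β x : ℝ) (hβ : 0 < β) (hx : 0 ≤ x) :
    ConvexOn ℝ (Set.Iic (0 : ℝ)) (fun α => p0B lam β α x) := by
  have hlam k := (hlam_bd k).1
  have hlam_meas := hlamL2.aestronglyMeasurable.aemeasurable
  have hthermal : ConvexOn ℝ (Iic 0) fun α => ∫ k, thermalIntegrand lam β x α k :=
    convexOn_integral (convex_Iic 0)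
      (fun _ hα => integrable_thermalIntegrand hlam hlam_meas hβ hx hα)
      ((volume.ae_ne 0).mono fun _ hk => convexOn_thermalIntegrand hlam hβ hx hk)
  have hground : ConvexOn ℝ (Iic 0) fun α => ∫ k, groundStateIntegrand lam x α k :=
    convexOn_integral (convex_Iic 0)
      (fun _ hα => integrable_groundStateIntegrand hlam_bd hlam_meas hlamL2.integrable_sq hx hα)
      (.of_forall fun k => convexOn_groundStateIntegrand hlam hx k)
  have hlinear : ConvexOn ℝ (Iic 0) fun α : ℝ => x * α := (convexOn_id (convex_Iic 0)).smul hx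
  simp_rw [p0B_eq]
  exact (hlinear.add (hthermal.smul (by positivity))).add (hground.smul (by positivity))

/-- for fixed `β > 0` and `x ≥ 0`, the map `α ↦ p₀ᴮ(β,α,x)` is convex
on the half-line `(−∞,0]`. -/
theorem stmt_2 (lam : EuclideanSpace ℝ (Fin 3) → ℝ)
    (hlam_cont : Continuous lam) (hlam0 : 0 < lam 0)
    (hlam_bd : ∀ k, 0 ≤ lam k ∧ lam k ≤ lam 0) (hlamL2 : MemLp lam 2 volume)
    (β x : ℝ) (hβ : 0 < β) (hx : 0 ≤ x) :
    ConvexOn ℝ (Set.Iic (0 : ℝ)) (fun α => p0B lam β α x) :=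
  stmt_2_general lam hlam_bd hlamL2 β x hβ hx
end

section
/- (Legendre transform identity of Lemma 'The free-energy density f^{SB} in the thermodynamic limit'.) For every β > 0, x ≥ 0 and y ≥ 0, sup_{μ ∈ ℝ} { μ(y + x) − inf_{α ≤ 0} { p₀ᴮ(β,α,x) + (μ − α)²/(2λ₀) } } = f₀ᴮ(β,y,x) + (λ₀/2)(y + x)². In words: the Legendre–Fenchel transform in μ of the function μ ↦ inf_{α ≤ 0}{ p₀ᴮ(β,α,x) + (μ−α)²/(2λ₀) } equals the Legendre–Fenchel transform f₀ᴮ of p₀ᴮ plus the mean-field term (λ₀/2)(y + x)². -/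
open MeasureTheory Real Filter Set

/-!
The map `μ ↦ inf_{α ≤ 0} {p₀ᴮ(α) + (μ - α)² / (2λ₀)}` is the infimal convolution of `p₀ᴮ`
with the quadratic `u ↦ u² / (2λ₀)`, and the Legendre transform turns an infimal convolution
into a sum: the transform of the quadratic is `t ↦ λ₀ t² / 2`. Concretely, the Fenchel–Young
inequality `u t - λ₀ t² / 2 ≤ u² / (2λ₀)`, with equality at `u = λ₀ t`, gives both inequalities.
On the side of `p₀ᴮ`, the bound `αx ≤ p₀ᴮ(β, α, x)` (each integral has a sign) keeps `f₀ᴮ` finite.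
-/

lemma mul_sub_half_mul_sq_le_sq_div {c : ℝ} (hc : 0 < c) (u t : ℝ) :
    u * t - c / 2 * t ^ 2 ≤ u ^ 2 / (2 * c) := by
  rw [le_div_iff₀ (by positivity)]
  nlinarith [sq_nonneg (u - c * t)]

section InfConvolution

variable {s : Set ℝ} {p : ℝ → ℝ} {c t : ℝ}

lemma sub_sSup_le_infConv (hc : 0 < c) (hbdd : BddAbove {v | ∃ α ∈ s, v = α * t - p α})
    (μ : ℝ) {α : ℝ} (hα : α ∈ s) :
    μ * t - sSup {v | ∃ α ∈ s, v = α * t - p α} - c / 2 * t ^ 2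
      ≤ p α + (μ - α) ^ 2 / (2 * c) := by
  have hle_sSup : α * t - p α ≤ sSup {v | ∃ α ∈ s, v = α * t - p α} :=
    le_csSup hbdd ⟨α, hα, rfl⟩
  have := mul_sub_half_mul_sq_le_sq_div hc (μ - α) t
  linarith

theorem sSup_sub_sInf_infConv_eq (hc : 0 < c) (hs : s.Nonempty)
    (hbdd : BddAbove {v | ∃ α ∈ s, v = α * t - p α}) :
    sSup {v | ∃ μ : ℝ, v = μ * t - sInf {w | ∃ α ∈ s, w = p α + (μ - α) ^ 2 / (2 * c)}}
      = sSup {v | ∃ α ∈ s, v = α * t - p α} + c / 2 * t ^ 2 := by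
  set F := sSup {v | ∃ α ∈ s, v = α * t - p α}
  set infConv := fun μ => sInf {w | ∃ α ∈ s, w = p α + (μ - α) ^ 2 / (2 * c)}
  obtain ⟨α₀, hα₀⟩ := hs
  have hlower (μ : ℝ) : μ * t - F - c / 2 * t ^ 2 ≤ infConv μ :=
    le_csInf ⟨_, α₀, hα₀, rfl⟩ fun _ ⟨_, hα, hw⟩ => hw ▸ sub_sSup_le_infConv hc hbdd μ hα
  have hupper : ∀ v ∈ {v | ∃ μ : ℝ, v = μ * t - infConv μ}, v ≤ F + c / 2 * t ^ 2 := by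
    rintro _ ⟨μ, rfl⟩
    linarith [hlower μ]
  refine le_antisymm (csSup_le ⟨_, 0, rfl⟩ hupper) ?_
  rw [← le_sub_iff_add_le]
  refine csSup_le ⟨_, α₀, hα₀, rfl⟩ ?_
  rintro _ ⟨α, hα, rfl⟩
  -- the quadratic term is optimal at `μ = α + c t`
  have hinf : infConv (α + c * t) ≤ p α + c / 2 * t ^ 2 := by
    refine csInf_le ⟨_, fun _ ⟨_, hα', hw⟩ => hw ▸ sub_sSup_le_infConv hc hbdd _ hα'⟩
      ⟨α, hα, ?_⟩
    field_simp
    ring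
  have hsup : (α + c * t) * t - infConv (α + c * t)
      ≤ sSup {v | ∃ μ : ℝ, v = μ * t - infConv μ} :=
    le_csSup ⟨_, hupper⟩ ⟨_, rfl⟩
  linarith [show (α + c * t) * t = α * t + c * t ^ 2 by ring]

end InfConvolution

lemma log_one_sub_exp_neg_nonpos {r : ℝ} (hr : 0 ≤ r) : log (1 - exp (-r)) ≤ 0 := by
  have : exp (-r) ≤ 1 := exp_le_one_iff.mpr (by linarith)
  exact log_nonpos (by linarith [exp_pos (-r)]) (by linarith [exp_pos (-r)])

lemma sqrt_mul_add_two_mul_le {a b : ℝ} (ha : 0 ≤ a) (hb : 0 ≤ b) :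
    √(a * (a + 2 * b)) ≤ a + b :=
  sqrt_le_iff.mpr ⟨by linarith, by nlinarith [sq_nonneg b]⟩

lemma mul_le_p0B {lam : EuclideanSpace ℝ (Fin 3) → ℝ} (hlam : ∀ k, 0 ≤ lam k)
    {β α x : ℝ} (hβ : 0 < β) (hα : α ≤ 0) (hx : 0 ≤ x) :
    α * x ≤ p0B lam β α x := by
  have hlog : ∫ k, log (1 - exp (-(β * √((eps k - α) * (eps k - α + 2 * x * lam k))))) ≤ 0 :=
    integral_nonpos fun k => log_one_sub_exp_neg_nonpos (by positivity)
  have hgap : 0 ≤ ∫ k, (eps k - α + x * lam k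
      - √((eps k - α) * (eps k - α + 2 * x * lam k))) := by
    refine integral_nonneg fun k => ?_
    have heps : 0 ≤ eps k - α := by unfold eps; nlinarith [norm_nonneg k]
    have := sqrt_mul_add_two_mul_le heps (mul_nonneg hx (hlam k))
    rw [← mul_assoc] at this
    simp only [Pi.zero_apply]
    linarith
  have h₁ := mul_nonpos_of_nonneg_of_nonpos (by positivity : 0 ≤ (β * (2 * π) ^ 3)⁻¹) hlog
  have h₂ := mul_nonneg (by positivity : 0 ≤ (2 * (2 * π) ^ 3)⁻¹) hgap
  unfold p0B
  linarith

theorem stmt_11_general (lam : EuclideanSpace ℝ (Fin 3) → ℝ)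
    (hlam0 : 0 < lam 0)
    (hlam_bd : ∀ k, 0 ≤ lam k ∧ lam k ≤ lam 0)
    (β x y : ℝ) (hβ : 0 < β) (hx : 0 ≤ x) (hy : 0 ≤ y) :
    sSup {v : ℝ | ∃ μ : ℝ,
        v = μ * (y + x)
          - sInf {w : ℝ | ∃ α ≤ (0 : ℝ), w = p0B lam β α x + (μ - α) ^ 2 / (2 * lam 0)}}
      = f0B lam β y x + lam 0 / 2 * (y + x) ^ 2 := by
  have hbdd : BddAbove {v | ∃ α ∈ Iic (0 : ℝ), v = α * (y + x) - p0B lam β α x} := by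
    refine ⟨0, ?_⟩
    rintro v ⟨α, hα, rfl⟩
    have := mul_le_p0B (fun k => (hlam_bd k).1) hβ hα hx
    nlinarith [mul_nonpos_of_nonpos_of_nonneg (mem_Iic.mp hα) hy]
  exact sSup_sub_sInf_infConv_eq hlam0 nonempty_Iic hbdd

/-- Legendre transform identity: the Legendre–Fenchel transform in `μ` of
`μ ↦ inf_{α ≤ 0} {p₀ᴮ(β,α,x) + (μ−α)²/(2λ₀)}` equals `f₀ᴮ(β,y,x) + (λ₀/2)(y+x)²`
(with `λ₀ = λ(0)`). -/
theorem stmt_11 (lam : EuclideanSpace ℝ (Fin 3) → ℝ)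
    (hlam_cont : Continuous lam) (hlam0 : 0 < lam 0)
    (hlam_bd : ∀ k, 0 ≤ lam k ∧ lam k ≤ lam 0) (hlamL2 : MemLp lam 2 volume)
    (β x y : ℝ) (hβ : 0 < β) (hx : 0 ≤ x) (hy : 0 ≤ y) :
    sSup {v : ℝ | ∃ μ : ℝ,
        v = μ * (y + x)
          - sInf {w : ℝ | ∃ α ≤ (0 : ℝ), w = p0B lam β α x + (μ - α) ^ 2 / (2 * lam 0)}}
      = f0B lam β y x + lam 0 / 2 * (y + x) ^ 2 :=
  stmt_11_general lam hlam0 hlam_bd β x y hβ hx hy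
end
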